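/- arXiv:2309.01309 — 2 statements merged into one kernel-verified Lean document; each statement's English description precedes it below -/
import Mathlib

section
/- Let n ≥ 1, let A, B be two k-element subsets of {1,...,n}, and let r ≠ r' ∈ {1,...,n} be such that A ≤_r B and A ≤_{r'} B. Then for every k-element subset I of {1,...,n} with A ≤_r I ≤_r B, one has #(A ∩ [r,r')_c) = #(I ∩ [r,r')_c) = #(B ∩ [r,r')_c). -/
/-- Number of inversions of a permutation of `Fin n`. -/
def invNum {n : ℕ} (w : Equiv.Perm (Fin n)) : ℕ :=
  (Finset.univ.filter (fun p : Fin n × Fin n => p.1 < p.2 ∧ w p.2 < w p.1)).card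

/-- Directed edge of the quantum Bruhat graph `Γ_n`. -/
def qbEdge {n : ℕ} (w w' : Equiv.Perm (Fin n)) : Prop :=
  ∃ i j : Fin n, i < j ∧ w' = w * Equiv.swap i j ∧
    (invNum w' = invNum w + 1 ∨ invNum w' + 2 * (j.val - i.val) = invNum w + 1)

/-- Directed edge of the quantum Bruhat graph together with its weight vector in `ℤ^{n-1}`;
coordinate `m : Fin (n-1)` corresponds to the variable `q_{m+1}` (1-indexed). -/
def qbEdgeWt {n : ℕ} (w w' : Equiv.Perm (Fin n)) (c : Fin (n - 1) → ℤ) : Prop :=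
  ∃ i j : Fin n, i < j ∧ w' = w * Equiv.swap i j ∧
    ((invNum w' = invNum w + 1 ∧ c = 0) ∨
     (invNum w' + 2 * (j.val - i.val) = invNum w + 1 ∧
      c = fun m => if i.val ≤ m.val ∧ m.val < j.val then 1 else 0))

/-- Directed paths in the quantum Bruhat graph from `u` to `v`,
recording the number of edges and the total weight. -/
inductive qbPathWt {n : ℕ} :
    Equiv.Perm (Fin n) → Equiv.Perm (Fin n) → ℕ → (Fin (n - 1) → ℤ) → Prop
  | refl (u : Equiv.Perm (Fin n)) : qbPathWt u u 0 0
  | step {u w v : Equiv.Perm (Fin n)} {len : ℕ} {c c' : Fin (n - 1) → ℤ} :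
      qbEdgeWt u w c → qbPathWt w v len c' → qbPathWt u v (len + 1) (c + c')

/-- `ℓ(u,v)`: minimal number of edges of a directed path from `u` to `v` in `Γ_n`. -/
noncomputable def qbDist {n : ℕ} (u v : Equiv.Perm (Fin n)) : ℕ :=
  sInf {k | ∃ c, qbPathWt u v k c}

/-- `depth(A,B)`: max over `0 ≤ x ≤ n` of `#(B ∩ {1,…,x}) − #(A ∩ {1,…,x})`
(`Fin n` is 0-indexed, so `{1,…,x}` corresponds to `val < x`). -/
def depthAB {n : ℕ} (A B : Finset (Fin n)) : ℕ :=
  (Finset.range (n + 1)).sup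
    (fun x => (B.filter (fun b => b.val < x)).card - (A.filter (fun a => a.val < x)).card)

/-- `w[k] = {w(1),…,w(k)}`. -/
def permSet {n : ℕ} (w : Equiv.Perm (Fin n)) (k : ℕ) : Finset (Fin n) :=
  (Finset.univ.filter (fun i : Fin n => i.val < k)).image w

/-- The Gale order on subsets of `Fin n` (componentwise comparison of sorted lists). -/
def galeLE {n : ℕ} (A B : Finset (Fin n)) : Prop :=
  A.card = B.card ∧ ∀ (k : ℕ) (hA : A.card = k) (hB : B.card = k) (t : Fin k),
    A.orderEmbOfFin hA t ≤ B.orderEmbOfFin hB t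

/-- The shifted Gale order `≤_r`; `r : Fin n` encodes the paper's `r = r.val + 1`, and
`x ≤_r y` iff `x - r ≤ y - r` in `Fin n`. -/
def shiftedGaleLE {n : ℕ} (r : Fin n) (A B : Finset (Fin n)) : Prop :=
  galeLE (A.image (fun x => x - r)) (B.image (fun x => x - r))

/-- The closed cyclic interval `[a,b]_c` in `Fin n`. -/
def cycIcc {n : ℕ} (a b : Fin n) : Finset (Fin n) :=
  Finset.univ.filter (fun x => (x - a).val ≤ (b - a).val)

/-- The half-open cyclic interval `[a,b)_c` in `Fin n`. -/
def cycIco {n : ℕ} (a b : Fin n) : Finset (Fin n) :=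
  Finset.univ.filter (fun x => (x - a).val < (b - a).val)

/-- A complete flag in `ℂ^n`: a chain `F_0 ⊆ F_1 ⊆ ⋯ ⊆ F_n` with `dim F_i = i`. -/
structure CompleteFlag (n : ℕ) where
  space : ℕ → Submodule ℂ (Fin n → ℂ)
  mono : Monotone space
  dim_eq : ∀ i, i ≤ n → Module.finrank ℂ (space i) = i

/-- The coordinate projection `Proj_S` (zeroing out coordinates outside `S`). -/
noncomputable def projS {n : ℕ} (S : Finset (Fin n)) : (Fin n → ℂ) →ₗ[ℂ] (Fin n → ℂ) :=
  LinearMap.pi (fun i => if i ∈ S then LinearMap.proj i else 0)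

/-- `dim Proj_S (V)`. -/
noncomputable def projDim {n : ℕ} (S : Finset (Fin n)) (V : Submodule ℂ (Fin n → ℂ)) : ℕ :=
  Module.finrank ℂ (V.map (projS S))

/-- Membership in the tilted Richardson variety `T_{u,v,a}` (rank conditions, `≤`). -/
def memT {n : ℕ} [NeZero n] (u v : Equiv.Perm (Fin n)) (a : ℕ → Fin n)
    (F : CompleteFlag n) : Prop :=
  ∀ i : ℕ, 1 ≤ i → i ≤ n - 1 → ∀ j : Fin n,
    projDim (cycIcc (a i) j) (F.space i) ≤ (permSet u i ∩ cycIcc (a i) j).card ∧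
    projDim (cycIcc j (a i - 1)) (F.space i) ≤ (permSet v i ∩ cycIcc j (a i - 1)).card

/-- Membership in the open tilted Richardson variety `T°_{u,v,a}` (rank conditions, `=`). -/
def memT0 {n : ℕ} [NeZero n] (u v : Equiv.Perm (Fin n)) (a : ℕ → Fin n)
    (F : CompleteFlag n) : Prop :=
  ∀ i : ℕ, 1 ≤ i → i ≤ n - 1 → ∀ j : Fin n,
    projDim (cycIcc (a i) j) (F.space i) = (permSet u i ∩ cycIcc (a i) j).card ∧
    projDim (cycIcc j (a i - 1)) (F.space i) = (permSet v i ∩ cycIcc j (a i - 1)).card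

/-- `M` is a matrix representative of the flag `F`: the first `i` columns span `F_i`. -/
def IsFlagMatrix {n : ℕ} (F : CompleteFlag n) (M : Matrix (Fin n) (Fin n) ℂ) : Prop :=
  ∀ i : ℕ, i ≤ n →
    Submodule.span ℂ ((fun j : Fin n => M.transpose j) '' {j : Fin n | j.val < i}) = F.space i

/-- The Plücker minor `P_I(M)`: the determinant of the submatrix of `M` on rows `I`
and the first `#I` columns. -/
noncomputable def minorP {n : ℕ} (M : Matrix (Fin n) (Fin n) ℂ) (I : Finset (Fin n)) : ℂ :=
  Matrix.det (M.submatrix (fun t : Fin I.card => I.orderEmbOfFin rfl t)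
    (fun t : Fin I.card => Fin.castLE (by simpa using I.card_le_univ) t))

/-- The sequence `a` is flat for `(u,v)`. -/
def IsFlat {n : ℕ} (u v : Equiv.Perm (Fin n)) (a : ℕ → Fin n) : Prop :=
  (∀ k, 1 ≤ k → k ≤ n - 1 → shiftedGaleLE (a k) (permSet u k) (permSet v k)) ∧
  (∀ k, 2 ≤ k → k ≤ n - 1 → shiftedGaleLE (a k) (permSet u (k - 1)) (permSet v (k - 1)))

/-- The tilted Rothe diagram `D_a^↓(u)`; the pair `(i,k) : Fin n × Fin n` encodes the
paper's pair `(i.val + 1, k.val + 1)`. -/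
def Ddown {n : ℕ} (a : ℕ → Fin n) (u : Equiv.Perm (Fin n)) : Finset (Fin n × Fin n) :=
  Finset.univ.filter (fun p : Fin n × Fin n =>
    p.2.val < n - 1 ∧ (p.1 - a (p.2.val + 1)).val < (u p.2 - a (p.2.val + 1)).val ∧
      p.2.val < (u⁻¹ p.1).val)

/-- The tilted Rothe diagram `D_a^↑(v)`. -/
def Dup {n : ℕ} (a : ℕ → Fin n) (v : Equiv.Perm (Fin n)) : Finset (Fin n × Fin n) :=
  Finset.univ.filter (fun p : Fin n × Fin n =>
    p.2.val < n - 1 ∧ (v p.2 - a (p.2.val + 1)).val < (p.1 - a (p.2.val + 1)).val ∧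
      p.2.val < (v⁻¹ p.1).val)

/-- Membership in the cyclically rotated Grassmannian Richardson variety `R_{I,J,r}`. -/
def memR {n : ℕ} [NeZero n] (I J : Finset (Fin n)) (r : Fin n)
    (V : Submodule ℂ (Fin n → ℂ)) : Prop :=
  ∀ j : Fin n,
    projDim (cycIcc r j) V ≤ (I ∩ cycIcc r j).card ∧
    projDim (cycIcc j (r - 1)) V ≤ (J ∩ cycIcc j (r - 1)).card

lemma fin_sub_val' {n : ℕ} (a b : Fin n) :
    (a - b).val + b.val = a.val ∨ (a - b).val + b.val = a.val + n := by
  have hb := b.isLt; have ha := a.isLt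
  have h : (a - b).val = (n - b.val + a.val) % n := by rw [Fin.sub_def]
  rcases Nat.lt_or_ge (n - b.val + a.val) n with hc | hc
  · rw [Nat.mod_eq_of_lt hc] at h; omega
  · rw [Nat.mod_eq_sub_mod hc, Nat.mod_eq_of_lt (by omega)] at h
    omega

lemma fin_mem_compl' {n : ℕ} {r r' : Fin n} (hne : r ≠ r') (x : Fin n) :
    (x - r').val < (r - r').val ↔ ¬ (x - r).val < (r' - r).val := by
  have h1 := fin_sub_val' x r
  have h2 := fin_sub_val' x r'
  have h3 := fin_sub_val' r' r
  have h4 := fin_sub_val' r r'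
  have b1 := (x - r).isLt; have b2 := (x - r').isLt
  have b3 := (r' - r).isLt; have b4 := (r - r').isLt
  have hne' : r.val ≠ r'.val := fun h => hne (Fin.val_injective h)
  omega

lemma gale_count' {n : ℕ} {A B : Finset (Fin n)} (h : galeLE A B)
    (p : Fin n → Prop) [DecidablePred p] (hp : ∀ ⦃y y' : Fin n⦄, y ≤ y' → p y' → p y) :
    (B.filter p).card ≤ (A.filter p).card := by
  obtain ⟨hcard, hle⟩ := h
  have key : ∀ (S : Finset (Fin n)) (hS : S.card = A.card),
      (Finset.univ.filter (fun i : Fin A.card => p (S.orderEmbOfFin hS i))).card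
        = (S.filter p).card := by
    intro S hS
    apply Finset.card_bij (fun i _ => S.orderEmbOfFin hS i)
    · intro i hi
      simp only [Finset.mem_filter] at hi ⊢
      exact ⟨S.orderEmbOfFin_mem hS i, hi.2⟩
    · intro i _ j _ hij
      exact (S.orderEmbOfFin hS).injective hij
    · intro a ha
      simp only [Finset.mem_filter] at ha
      have hmem : a ∈ (↑S : Set (Fin n)) := ha.1
      rw [← Finset.range_orderEmbOfFin S hS] at hmem
      obtain ⟨i, hi⟩ := hmem
      refine ⟨i, Finset.mem_filter.mpr ⟨Finset.mem_univ i, ?_⟩, hi⟩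
      rw [hi]; exact ha.2
  rw [← key A rfl, ← key B hcard.symm]
  apply Finset.card_le_card
  intro i hi
  simp only [Finset.mem_filter] at hi ⊢
  exact ⟨Finset.mem_univ i, hp (hle A.card rfl hcard.symm i) hi.2⟩

lemma shifted_count' {n : ℕ} {A B : Finset (Fin n)} {r : Fin n}
    (h : shiftedGaleLE r A B) (m : ℕ) :
    (B.filter (fun x => (x - r).val < m)).card
      ≤ (A.filter (fun x => (x - r).val < m)).card := by
  have hinj : Function.Injective (fun x : Fin n => x - r) := by
    intro a b hab
    have hv : (a - r).val = (b - r).val := congrArg Fin.val hab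
    have h1 := fin_sub_val' a r
    have h2 := fin_sub_val' b r
    have ha := a.isLt; have hb := b.isLt
    exact Fin.val_injective (by omega)
  have key : ∀ S : Finset (Fin n), (S.filter (fun x => (x - r).val < m)).card
      = ((S.image (fun x => x - r)).filter (fun y => y.val < m)).card := by
    intro S
    rw [Finset.filter_image, Finset.card_image_of_injective _ hinj]
  rw [key, key]
  exact gale_count' h (fun y => y.val < m)
    (fun y y' hle hy => lt_of_le_of_lt hle hy)

lemma inter_cycIco' {n : ℕ} (S : Finset (Fin n)) (r r' : Fin n) :
    S ∩ cycIco r r' = S.filter (fun x => (x - r).val < (r' - r).val) := by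
  ext x
  simp [cycIco, Finset.mem_filter, Finset.mem_inter]

/-- If `A ≤_r B` and `A ≤_{r'} B` for `r ≠ r'`, then every `I` in the
interval `[A,B]_r` satisfies `#(A ∩ [r,r')_c) = #(I ∩ [r,r')_c) = #(B ∩ [r,r')_c)`. -/
theorem card_cyc_interval_eq (n k : ℕ) (hn : 1 ≤ n) (A B : Finset (Fin n))
    (hA : A.card = k) (hB : B.card = k) (r r' : Fin n) (hne : r ≠ r')
    (hr : shiftedGaleLE r A B) (hr' : shiftedGaleLE r' A B)
    (I : Finset (Fin n)) (hI : I.card = k)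
    (h1 : shiftedGaleLE r A I) (h2 : shiftedGaleLE r I B) :
    (A ∩ cycIco r r').card = (I ∩ cycIco r r').card ∧
      (I ∩ cycIco r r').card = (B ∩ cycIco r r').card := by
  have part : ∀ S : Finset (Fin n),
      (S.filter (fun x => (x - r).val < (r' - r).val)).card
        + (S.filter (fun x => (x - r').val < (r - r').val)).card = S.card := by
    intro S
    have he : S.filter (fun x => (x - r').val < (r - r').val)
        = S.filter (fun x => ¬ (x - r).val < (r' - r).val) := by
      apply Finset.filter_congr
      intro x _
      simpa using fin_mem_compl' hne x
    rw [he, Finset.card_filter_add_card_filter_not]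
  have cAB := shifted_count' hr (r' - r).val
  have cAB' := shifted_count' hr' (r - r').val
  have cAI := shifted_count' h1 (r' - r).val
  have cIB := shifted_count' h2 (r' - r).val
  have pA := part A
  have pB := part B
  rw [inter_cycIco' A r r', inter_cycIco' I r r', inter_cycIco' B r r']
  rw [hA] at pA
  rw [hB] at pB
  omega
end

section
/- Let n ≥ 3, let u, v ∈ S_n, and let k ∈ {1,...,n−2}. Then there exists a ∈ {1,...,n} such that both u[k] ≤_a v[k] and u[k+1] ≤_a v[k+1] in the shifted Gale order. -/
/-! ### Auxiliary lemmas for `exists_common_shift` -/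

/-- Linear prefix count: number of elements of `S` with value `< x`. -/
private def linCnt {n : ℕ} (S : Finset (Fin n)) (x : ℕ) : ℕ :=
  (S.filter (fun y => y.val < x)).card

private lemma linCnt_zero {n : ℕ} (S : Finset (Fin n)) : linCnt S 0 = 0 := by
  simp [linCnt]

private lemma linCnt_of_ge {n : ℕ} (S : Finset (Fin n)) {x : ℕ} (hx : n ≤ x) :
    linCnt S x = S.card := by
  unfold linCnt
  rw [Finset.filter_true_of_mem]
  intro y _
  exact lt_of_lt_of_le y.isLt hx

private lemma card_filter_emb {n : ℕ} (A : Finset (Fin n)) {k : ℕ} (hA : A.card = k)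
    (p : Fin n → Prop) [DecidablePred p] :
    (A.filter p).card =
      (Finset.univ.filter (fun t : Fin k => p (A.orderEmbOfFin hA t))).card := by
  symm
  apply Finset.card_bij (fun t _ => A.orderEmbOfFin hA t)
  · intro t ht
    simp only [Finset.mem_filter] at ht ⊢
    exact ⟨A.orderEmbOfFin_mem hA t, ht.2⟩
  · intro t₁ _ t₂ _ h
    exact (A.orderEmbOfFin hA).injective h
  · intro y hy
    simp only [Finset.mem_filter] at hy
    have hmem : y ∈ Set.range (A.orderEmbOfFin hA) := by
      rw [Finset.range_orderEmbOfFin]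
      exact hy.1
    obtain ⟨t, ht⟩ := hmem
    exact ⟨t, by simp [ht, hy.2], ht⟩

private lemma galeLE_iff_counts {n : ℕ} {A B : Finset (Fin n)} (h : A.card = B.card) :
    galeLE A B ↔ ∀ x : ℕ,
      (B.filter (fun y => y.val < x)).card ≤ (A.filter (fun y => y.val < x)).card := by
  constructor
  · rintro ⟨-, hg⟩ x
    rw [card_filter_emb A h (fun y => y.val < x),
        card_filter_emb B rfl (fun y => y.val < x)]
    apply Finset.card_le_card
    intro t ht
    simp only [Finset.mem_filter, Finset.mem_univ, true_and] at ht ⊢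
    have := hg B.card h rfl t
    omega
  · intro hc
    refine ⟨h, ?_⟩
    intro k hA hB t
    by_contra hlt
    push_neg at hlt
    have hx := hc (A.orderEmbOfFin hA t).val
    rw [card_filter_emb A hA (fun y => y.val < (A.orderEmbOfFin hA t).val),
        card_filter_emb B hB (fun y => y.val < (A.orderEmbOfFin hA t).val)] at hx
    have hAeq : (Finset.univ.filter
        (fun s : Fin k => (A.orderEmbOfFin hA s).val < (A.orderEmbOfFin hA t).val))
        = Finset.univ.filter (fun s : Fin k => s < t) := by
      apply Finset.filter_congr
      intro s _
      constructor
      · intro hs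
        exact (A.orderEmbOfFin hA).lt_iff_lt.mp (by exact hs)
      · intro hs
        exact (A.orderEmbOfFin hA).lt_iff_lt.mpr hs
    have hBsub : Finset.univ.filter (fun s : Fin k => s ≤ t) ⊆
        Finset.univ.filter
          (fun s : Fin k => (B.orderEmbOfFin hB s).val < (A.orderEmbOfFin hA t).val) := by
      intro s hs
      simp only [Finset.mem_filter, Finset.mem_univ, true_and] at hs ⊢
      have h1 : B.orderEmbOfFin hB s ≤ B.orderEmbOfFin hB t :=
        (B.orderEmbOfFin hB).le_iff_le.mpr hs
      exact lt_of_le_of_lt h1 hlt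
    rw [hAeq] at hx
    have hss : (Finset.univ.filter (fun s : Fin k => s < t)).card <
        (Finset.univ.filter (fun s : Fin k => s ≤ t)).card := by
      apply Finset.card_lt_card
      constructor
      · intro s hs
        simp only [Finset.mem_filter, Finset.mem_univ, true_and] at hs ⊢
        exact le_of_lt hs
      · intro hsub
        have := hsub (by simp : t ∈ Finset.univ.filter (fun s : Fin k => s ≤ t))
        simp at this
    have := Finset.card_le_card hBsub
    omega

private lemma fin_sub_val {n : ℕ} (hn : 0 < n) (y r : Fin n) :
    (y - r).val = if r.val ≤ y.val then y.val - r.val else y.val + n - r.val := by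
  have hy := y.isLt
  have hr := r.isLt
  rw [Fin.sub_def]
  simp only
  split_ifs with h
  · have h1 : n - r.val + y.val = (y.val - r.val) + n := by omega
    rw [h1, Nat.add_mod_right]
    exact Nat.mod_eq_of_lt (by omega)
  · have h1 : n - r.val + y.val = y.val + n - r.val := by omega
    rw [h1]
    exact Nat.mod_eq_of_lt (by omega)

private lemma cnt_key {n : ℕ} (hn : 0 < n) (S : Finset (Fin n)) (r : Fin n) {x : ℕ}
    (hx : x ≤ n) :
    (S.filter (fun y => (y - r).val < x)).card + linCnt S r.val
      = linCnt S (r.val + x) + linCnt S (r.val + x - n) := by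
  unfold linCnt
  have e : ∀ (p : Fin n → Prop) [DecidablePred p],
      (S.filter p).card = ∑ y ∈ S, if p y then 1 else 0 := by
    intro p _
    rw [Finset.sum_boole]
    simp
  rw [e, e, e, e, ← Finset.sum_add_distrib, ← Finset.sum_add_distrib]
  apply Finset.sum_congr rfl
  intro y _
  have hy := y.isLt
  have hr := r.isLt
  rw [fin_sub_val hn]
  split_ifs <;> omega

/-- Key equivalence: the cyclic count condition at shift `r` holds iff `r.val` maximizes
the prefix-difference function on `[0, n]`. -/
private lemma cnt_iff_max {n : ℕ} (hn : 0 < n) (A B : Finset (Fin n))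
    (hcard : A.card = B.card) (r : Fin n) :
    (∀ x : ℕ, (B.filter (fun y => (y - r).val < x)).card
        ≤ (A.filter (fun y => (y - r).val < x)).card)
      ↔ ∀ m : ℕ, m ≤ n →
        (linCnt B m : ℤ) - linCnt A m ≤ (linCnt B r.val : ℤ) - linCnt A r.val := by
  have hr := r.isLt
  constructor
  · intro hcnt m hm
    by_cases hrm : r.val ≤ m
    · have hx : m - r.val ≤ n := by omega
      have hA := cnt_key hn A r hx
      have hB := cnt_key hn B r hx
      have h1 : r.val + (m - r.val) = m := by omega
      rw [h1] at hA hB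
      rw [show m - n = 0 by omega, linCnt_zero] at hA hB
      have := hcnt (m - r.val)
      omega
    · have hx : m + n - r.val ≤ n := by omega
      have hA := cnt_key hn A r hx
      have hB := cnt_key hn B r hx
      have h1 : r.val + (m + n - r.val) = m + n := by omega
      rw [h1] at hA hB
      rw [show m + n - n = m by omega] at hA hB
      rw [linCnt_of_ge A (show n ≤ m + n by omega)] at hA
      rw [linCnt_of_ge B (show n ≤ m + n by omega)] at hB
      have := hcnt (m + n - r.val)
      omega
  · intro hmax x
    by_cases hx : x ≤ n
    · have hA := cnt_key hn A r hx
      have hB := cnt_key hn B r hx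
      by_cases hxr : r.val + x ≤ n
      · have h2 : r.val + x - n = 0 := by omega
        rw [h2, linCnt_zero] at hA hB
        have := hmax (r.val + x) (by omega)
        omega
      · rw [linCnt_of_ge A (show n ≤ r.val + x by omega)] at hA
        rw [linCnt_of_ge B (show n ≤ r.val + x by omega)] at hB
        have := hmax (r.val + x - n) (by omega)
        omega
    · have hA : (A.filter (fun y => (y - r).val < x)).card = A.card := by
        rw [Finset.filter_true_of_mem]
        intro y _
        exact lt_of_lt_of_le (y - r).isLt (by omega)
      have hB : (B.filter (fun y => (y - r).val < x)).card = B.card := by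
        rw [Finset.filter_true_of_mem]
        intro y _
        exact lt_of_lt_of_le (y - r).isLt (by omega)
      omega

private lemma shiftedGaleLE_iff_max {n : ℕ} (hn : 0 < n) (A B : Finset (Fin n))
    (hcard : A.card = B.card) (r : Fin n) :
    shiftedGaleLE r A B ↔ ∀ m : ℕ, m ≤ n →
      (linCnt B m : ℤ) - linCnt A m ≤ (linCnt B r.val : ℤ) - linCnt A r.val := by
  have hinj : Function.Injective (fun x : Fin n => x - r) := by
    intro x y hxy
    simp only at hxy
    have h := congrArg Fin.val hxy
    rw [fin_sub_val hn, fin_sub_val hn] at h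
    have hx := x.isLt
    have hy := y.isLt
    have hr := r.isLt
    have hv : x.val = y.val := by split_ifs at h <;> omega
    exact Fin.ext hv
  have hcard' : (A.image (fun x => x - r)).card = (B.image (fun x => x - r)).card := by
    rw [Finset.card_image_of_injective _ hinj, Finset.card_image_of_injective _ hinj, hcard]
  rw [shiftedGaleLE, galeLE_iff_counts hcard']
  have himg : ∀ (S : Finset (Fin n)) (x : ℕ),
      ((S.image (fun y => y - r)).filter (fun y => y.val < x)).card
        = (S.filter (fun y => (y - r).val < x)).card := by
    intro S x
    rw [Finset.filter_image, Finset.card_image_of_injective _ hinj]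
  constructor
  · intro hc
    rw [← cnt_iff_max hn A B hcard r]
    intro x
    have := hc x
    rwa [himg, himg] at this
  · intro hc x
    rw [himg, himg]
    exact (cnt_iff_max hn A B hcard r).mpr hc x

private lemma exists_common_max (N : ℕ) (hN : 0 < N) (D D' : ℕ → ℤ)
    (h1 : ∀ m, D m ≤ D' m) (h2 : ∀ m, D' m ≤ D m + 1) :
    ∃ p, p < N ∧ (∀ m, m < N → D m ≤ D p) ∧ (∀ m, m < N → D' m ≤ D' p) := by
  obtain ⟨p1, hp1, hmax1⟩ := (Finset.range N).exists_max_image D ⟨0, by simpa using hN⟩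
  obtain ⟨p2, hp2, hmax2⟩ := (Finset.range N).exists_max_image D' ⟨0, by simpa using hN⟩
  rw [Finset.mem_range] at hp1 hp2
  by_cases hc : D' p2 ≤ D' p1
  · refine ⟨p1, hp1, fun m hm => hmax1 m (Finset.mem_range.mpr hm), fun m hm => ?_⟩
    exact le_trans (hmax2 m (Finset.mem_range.mpr hm)) hc
  · push_neg at hc
    refine ⟨p2, hp2, fun m hm => ?_, fun m hm => hmax2 m (Finset.mem_range.mpr hm)⟩
    have ha := hmax1 m (Finset.mem_range.mpr hm)
    have hb := h1 p1
    have hd := h2 p2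
    omega

private lemma permSet_succ {n : ℕ} (w : Equiv.Perm (Fin n)) {k : ℕ} (hkn : k < n) :
    permSet w (k + 1) = insert (w ⟨k, hkn⟩) (permSet w k) := by
  unfold permSet
  have : (Finset.univ.filter (fun i : Fin n => i.val < k + 1))
      = insert (⟨k, hkn⟩ : Fin n) (Finset.univ.filter (fun i : Fin n => i.val < k)) := by
    ext i
    simp only [Finset.mem_filter, Finset.mem_univ, true_and, Finset.mem_insert, Fin.ext_iff]
    omega
  rw [this, Finset.image_insert]

private lemma notMem_permSet {n : ℕ} (w : Equiv.Perm (Fin n)) {k : ℕ} (hkn : k < n) :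
    w ⟨k, hkn⟩ ∉ permSet w k := by
  unfold permSet
  simp only [Finset.mem_image, Finset.mem_filter, Finset.mem_univ, true_and, not_exists]
  rintro i ⟨hi, hwi⟩
  have h2 := w.injective hwi
  have h3 : i.val = k := by rw [h2]
  omega

private lemma linCnt_insert {n : ℕ} (S : Finset (Fin n)) (c : Fin n) (hc : c ∉ S) (m : ℕ) :
    linCnt (insert c S) m = linCnt S m + if c.val < m then 1 else 0 := by
  unfold linCnt
  rw [Finset.filter_insert]
  split_ifs with h
  · rw [Finset.card_insert_of_notMem (fun hmem => hc (Finset.mem_of_mem_filter c hmem))]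
  · rw [Nat.add_zero]
/-- For any `u, v` and `k ∈ {1,…,n−2}` there is a common shift `r` with
`u[k] ≤_r v[k]` and `u[k+1] ≤_r v[k+1]`. -/
theorem exists_common_shift (n : ℕ) (hn : 3 ≤ n) (u v : Equiv.Perm (Fin n))
    (k : ℕ) (hk : 1 ≤ k) (hk' : k ≤ n - 2) :
    ∃ r : Fin n, shiftedGaleLE r (permSet u k) (permSet v k) ∧
      shiftedGaleLE r (permSet u (k + 1)) (permSet v (k + 1)) := by
  have hn0 : 0 < n := by omega
  have hkn : k < n := by omega
  set A := permSet u k with hA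
  set B := permSet v k with hB
  have hcard : A.card = B.card := by
    rw [hA, hB]
    unfold permSet
    rw [Finset.card_image_of_injective _ u.injective,
        Finset.card_image_of_injective _ v.injective]
  set a : Fin n := u ⟨k, hkn⟩ with ha
  set b : Fin n := v ⟨k, hkn⟩ with hb
  have hAins : permSet u (k + 1) = insert a A := permSet_succ u hkn
  have hBins : permSet v (k + 1) = insert b B := permSet_succ v hkn
  have haA : a ∉ A := notMem_permSet u hkn
  have hbB : b ∉ B := notMem_permSet v hkn
  have hcard' : (insert a A).card = (insert b B).card := by
    rw [Finset.card_insert_of_notMem haA, Finset.card_insert_of_notMem hbB, hcard]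
  set D : ℕ → ℤ := fun m => (linCnt B m : ℤ) - linCnt A m with hD
  set D' : ℕ → ℤ := fun m => (linCnt (insert b B) m : ℤ) - linCnt (insert a A) m with hD'
  have hrel : ∀ m, D' m = D m +
      ((if b.val < m then 1 else 0) - (if a.val < m then 1 else 0) : ℤ) := by
    intro m
    simp only [hD, hD', linCnt_insert B b hbB m, linCnt_insert A a haA m]
    push_cast
    ring
  obtain ⟨p, hpn, hmax1, hmax2⟩ : ∃ p, p < n ∧ (∀ m, m < n → D m ≤ D p) ∧
      (∀ m, m < n → D' m ≤ D' p) := by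
    rcases le_or_gt b.val a.val with hba | hba
    · exact exists_common_max n hn0 D D'
        (fun m => by rw [hrel]; split_ifs <;> omega)
        (fun m => by rw [hrel]; split_ifs <;> omega)
    · obtain ⟨p, h1, h2, h3⟩ := exists_common_max n hn0 D' D
        (fun m => by rw [hrel]; split_ifs <;> omega)
        (fun m => by rw [hrel]; split_ifs <;> omega)
      exact ⟨p, h1, h3, h2⟩
  have hDn : D n = 0 := by
    simp only [hD]
    rw [linCnt_of_ge A le_rfl, linCnt_of_ge B le_rfl, hcard]
    ring
  have hD'n : D' n = 0 := by
    simp only [hD']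
    rw [linCnt_of_ge (insert a A) le_rfl, linCnt_of_ge (insert b B) le_rfl, hcard']
    ring
  have hD0 : D 0 = 0 := by simp [hD, linCnt_zero]
  have hD'0 : D' 0 = 0 := by simp [hD', linCnt_zero]
  refine ⟨⟨p, hpn⟩, ?_, ?_⟩
  · rw [shiftedGaleLE_iff_max hn0 A B hcard ⟨p, hpn⟩]
    intro m hm
    have goal : D m ≤ D p := by
      rcases lt_or_eq_of_le hm with hlt | rfl
      · exact hmax1 m hlt
      · rw [hDn, ← hD0]
        exact hmax1 0 hn0
    simpa [hD] using goal
  · rw [hAins, hBins, shiftedGaleLE_iff_max hn0 (insert a A) (insert b B) hcard' ⟨p, hpn⟩]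
    intro m hm
    have goal : D' m ≤ D' p := by
      rcases lt_or_eq_of_le hm with hlt | rfl
      · exact hmax2 m hlt
      · rw [hD'n, ← hD'0]
        exact hmax2 0 hn0
    simpa [hD'] using goal
end
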